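/- For the monic truncated Hermite polynomials, the recurrence coefficients satisfy z·γ_n'(z) = 2γ_n(z)·(γ_{n−1}(z) − γ_{n+1}(z) + 1) for all n ≥ 1 and z > 0. -/

import Mathlib

open Polynomial

/-!
Write `h_n(z) = L_z[P_n²]`. Orthogonality and the recurrence give `γ_{n+1} h_n = h_{n+1}`, so
`h_n = γ_n ⋯ γ_1 h_0` is differentiable, and the recurrence makes `P_n` of parity `n`. Because `P_n` minimises `L_z[q²]` among monic `q` of degree
`n`, differentiating `h_n` only sees the moving endpoints: `h_n' = 2 P_n(z)² e^{-z²}`. Integrating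
`(P_{n+1} P_n e^{-x²})'` over `[-z, z]` gives `2 P_{n+1}(z) P_n(z) e^{-z²} = (n+1) h_n - 2 h_{n+1}`;
with the recurrence at `x = z` this turns `z (h_n / h_{n-1})'` into the stated formula.
-/

/-- The truncated Hermite linear functional `L[p] = ∫_{-z}^{z} p(x) e^{-x²} dx`. -/
noncomputable def truncL (z : ℝ) (p : Polynomial ℝ) : ℝ :=
  ∫ x in (-z)..z, p.eval x * Real.exp (-x ^ 2)

structure IsMonicOrthogonalFamily {R : Type*} [CommRing R] (L : R[X] →ₗ[R] R) (P : ℕ → R[X]) :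
    Prop where
  monic : ∀ n, (P n).Monic
  natDegree_eq : ∀ n, (P n).natDegree = n
  orthogonal : ∀ m n, m ≠ n → L (P m * P n) = 0

namespace IsMonicOrthogonalFamily

variable {R : Type*} [CommRing R] {L : R[X] →ₗ[R] R} {P : ℕ → R[X]}

theorem coeff_self (hP : IsMonicOrthogonalFamily L P) (n : ℕ) : (P n).coeff n = 1 := by
  simpa [hP.natDegree_eq n] using (hP.monic n).coeff_natDegree

theorem degree_sub_C_coeff_mul_lt (hP : IsMonicOrthogonalFamily L P) {k : ℕ} {q : R[X]}
    (hq : q.degree < ↑(k + 1)) : (q - C (q.coeff k) * P k).degree < k := by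
  rw [degree_lt_iff_coeff_zero] at hq ⊢
  intro m hm
  rcases hm.eq_or_lt with rfl | hm
  · simp [hP.coeff_self]
  · simp [hq m hm, coeff_eq_zero_of_natDegree_lt (hP.natDegree_eq k ▸ hm)]

theorem map_mul_eq_zero_of_degree_lt (hP : IsMonicOrthogonalFamily L P) {n : ℕ} {q : R[X]}
    (hq : q.degree < n) : L (P n * q) = 0 := by
  suffices ∀ k ≤ n, ∀ q : R[X], q.degree < k → L (P n * q) = 0 from this n le_rfl q hq
  intro k
  induction k with
  | zero => intro _ q hq; simp [Nat.WithBot.lt_zero_iff, degree_eq_bot] at hq; simp [hq]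
  | succ k ih =>
    intro hk q hq
    have hsplit : P n * q = P n * (q - C (q.coeff k) * P k) + q.coeff k • (P n * P k) := by
      rw [smul_eq_C_mul]; ring
    rw [hsplit, map_add, map_smul, ih (by omega) _ (hP.degree_sub_C_coeff_mul_lt hq),
      hP.orthogonal n k (by omega), smul_zero, add_zero]

theorem map_mul_eq_coeff_mul (hP : IsMonicOrthogonalFamily L P) {n : ℕ} {q : R[X]}
    (hq : q.natDegree ≤ n) : L (P n * q) = q.coeff n * L (P n * P n) := by
  have hlow := hP.degree_sub_C_coeff_mul_lt (k := n) (q := q)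
    (degree_le_natDegree.trans_lt (by exact_mod_cast Nat.lt_succ_of_le hq))
  have hsplit : P n * q = P n * (q - C (q.coeff n) * P n) + q.coeff n • (P n * P n) := by
    rw [smul_eq_C_mul]; ring
  rw [hsplit, map_add, map_smul, hP.map_mul_eq_zero_of_degree_lt hlow, smul_eq_mul, zero_add]

theorem map_mul_self_le [PartialOrder R] [IsOrderedAddMonoid R] (hP : IsMonicOrthogonalFamily L P)
    (hL : ∀ r, 0 ≤ L (r * r)) {n : ℕ} {Q : R[X]} (hQ : Q.Monic) (hQn : Q.natDegree = n) :
    L (P n * P n) ≤ L (Q * Q) := by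
  have hlow : (Q - P n).degree < n := by
    simpa [hQn ▸ hQ.coeff_natDegree] using hP.degree_sub_C_coeff_mul_lt (k := n) (q := Q)
      (degree_le_natDegree.trans_lt (by exact_mod_cast hQn.le.trans_lt n.lt_succ_self))
  have hsplit : Q * Q = P n * P n + (2 : R) • (P n * (Q - P n)) + (Q - P n) * (Q - P n) := by
    rw [smul_eq_C_mul, C_ofNat]; ring
  rw [hsplit, map_add, map_add, map_smul, hP.map_mul_eq_zero_of_degree_lt hlow, smul_zero, add_zero]
  exact le_add_of_nonneg_right (hL _)

theorem map_X_mul_mul (hP : IsMonicOrthogonalFamily L P) (n : ℕ) :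
    L (X * (P (n + 1) * P n)) = L (P (n + 1) * P (n + 1)) := by
  have hdeg : (X * P n).natDegree ≤ n + 1 :=
    natDegree_mul_le.trans (by linarith [natDegree_X_le (R := R), (hP.natDegree_eq n).le])
  rw [mul_left_comm, hP.map_mul_eq_coeff_mul hdeg, coeff_X_mul, hP.coeff_self, one_mul]

theorem mul_map_mul_self_of_recurrence (hP : IsMonicOrthogonalFamily L P) {n : ℕ} {c : R}
    (hrec : X * P (n + 1) = P (n + 2) + C c * P n) :
    c * L (P n * P n) = L (P (n + 1) * P (n + 1)) :=
  calc c * L (P n * P n) = L (P n * (P (n + 2) + C c * P n)) := by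
        rw [mul_add, map_add, hP.orthogonal n (n + 2) (by omega), C_mul', mul_smul_comm, map_smul,
          smul_eq_mul, zero_add]
    _ = L (X * (P (n + 1) * P n)) := by rw [← hrec]; ring_nf
    _ = L (P (n + 1) * P (n + 1)) := hP.map_X_mul_mul n

theorem map_derivative_mul (hP : IsMonicOrthogonalFamily L P) (n : ℕ) :
    L (derivative (P (n + 1) * P n)) = (n + 1) * L (P n * P n) := by
  have hlow : (derivative (P n)).degree < ↑(n + 1) := by
    rw [degree_lt_iff_coeff_zero]
    intro m hm
    rw [coeff_derivative, coeff_eq_zero_of_natDegree_lt (by rw [hP.natDegree_eq]; omega), zero_mul]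
  have hdeg : (derivative (P (n + 1))).natDegree ≤ n :=
    (natDegree_derivative_le _).trans (by rw [hP.natDegree_eq]; omega)
  rw [derivative_mul, map_add, mul_comm (derivative _), hP.map_mul_eq_coeff_mul hdeg,
    coeff_derivative, hP.coeff_self, one_mul, hP.map_mul_eq_zero_of_degree_lt hlow, add_zero]

end IsMonicOrthogonalFamily

theorem continuous_eval_mul_exp (p : ℝ[X]) : Continuous fun x => p.eval x * Real.exp (-x ^ 2) := by
  fun_prop

noncomputable def truncLinear (z : ℝ) : ℝ[X] →ₗ[ℝ] ℝ where
  toFun := truncL z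
  map_add' p q := by
    simp only [truncL, eval_add, add_mul]
    exact intervalIntegral.integral_add ((continuous_eval_mul_exp p).intervalIntegrable _ _)
      ((continuous_eval_mul_exp q).intervalIntegrable _ _)
  map_smul' a p := by
    simp only [truncL, eval_smul, smul_eq_mul, mul_assoc, RingHom.id_apply]
    exact intervalIntegral.integral_const_mul a _

@[simp]
theorem truncLinear_apply (z : ℝ) (p : ℝ[X]) : truncLinear z p = truncL z p := rfl

theorem truncL_mul_self_nonneg {z : ℝ} (hz : 0 ≤ z) (p : ℝ[X]) : 0 ≤ truncL z (p * p) :=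
  intervalIntegral.integral_nonneg (by linarith) fun x _ => by
    rw [eval_mul]; exact mul_nonneg (mul_self_nonneg _) (Real.exp_nonneg _)

theorem truncL_mul_self_pos {z : ℝ} (hz : 0 < z) {p : ℝ[X]} (hp : p ≠ 0) :
    0 < truncL z (p * p) := by
  rw [truncL, intervalIntegral.integral_of_le (by linarith),
    MeasureTheory.setIntegral_pos_iff_support_of_nonneg_ae
      (Filter.Eventually.of_forall fun x => by
        simp only [eval_mul, Pi.zero_apply]
        exact mul_nonneg (mul_self_nonneg _) (Real.exp_nonneg _))
      ((continuous_eval_mul_exp _).integrableOn_Ioc)]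
  have hroots : MeasureTheory.volume (p.rootSet ℝ) = 0 := (p.rootSet_finite ℝ).measure_zero _
  calc (0 : ENNReal) < MeasureTheory.volume (Set.Ioc (-z) z) := by simp; linarith
    _ = MeasureTheory.volume (Set.Ioc (-z) z \ p.rootSet ℝ) :=
      (MeasureTheory.measure_sdiff_null hroots).symm
    _ ≤ _ := by
      refine MeasureTheory.measure_mono fun x ⟨hx, hroot⟩ => ⟨?_, hx⟩
      have : p.eval x ≠ 0 := fun h0 => hroot ((mem_rootSet_of_ne hp).mpr h0)
      simp only [Function.mem_support, eval_mul]
      exact (mul_pos (mul_self_pos.mpr this) (Real.exp_pos _)).ne'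

theorem truncL_derivative_sub_two_mul_X (z : ℝ) (u : ℝ[X]) :
    truncL z (derivative u) - 2 * truncL z (X * u) =
      (u.eval z - u.eval (-z)) * Real.exp (-z ^ 2) := by
  have hderiv : ∀ x, HasDerivAt (fun x => u.eval x * Real.exp (-x ^ 2))
      ((derivative u).eval x * Real.exp (-x ^ 2) - 2 * ((X * u).eval x * Real.exp (-x ^ 2))) x := by
    intro x
    refine ((u.hasDerivAt x).mul ((hasDerivAt_pow 2 x).fun_neg.exp)).congr_deriv ?_
    simp only [eval_mul, eval_X]; ring
  have hint := intervalIntegral.integral_eq_sub_of_hasDerivAt (a := -z) (b := z)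
    (fun x _ => hderiv x) (((continuous_eval_mul_exp _).sub
      ((continuous_eval_mul_exp _).const_mul 2)).intervalIntegrable _ _)
  rw [intervalIntegral.integral_sub ((continuous_eval_mul_exp _).intervalIntegrable _ _)
    (((continuous_eval_mul_exp _).intervalIntegrable _ _).const_mul 2),
    intervalIntegral.integral_const_mul, neg_sq] at hint
  rw [truncL, truncL, hint]; ring

theorem hasDerivAt_truncL (p : ℝ[X]) (z : ℝ) :
    HasDerivAt (fun w => truncL w p) ((p.eval z + p.eval (-z)) * Real.exp (-z ^ 2)) z := by
  have hF := fun b => ((continuous_eval_mul_exp p).integral_hasStrictDerivAt 0 b).hasDerivAt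
  have hsplit : (fun w => truncL w p) = fun w =>
      (∫ x in (0 : ℝ)..w, p.eval x * Real.exp (-x ^ 2)) -
        ∫ x in (0 : ℝ)..(-w), p.eval x * Real.exp (-x ^ 2) := by
    funext w
    rw [truncL, ← intervalIntegral.integral_add_adjacent_intervals (b := 0)
      ((continuous_eval_mul_exp p).intervalIntegrable _ _)
      ((continuous_eval_mul_exp p).intervalIntegrable _ _), intervalIntegral.integral_symm 0 (-w)]
    ring
  rw [hsplit]
  refine ((hF z).sub ((hF (-z)).comp z (hasDerivAt_neg z))).congr_deriv ?_
  rw [neg_sq]; ring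

theorem eval_neg_of_recurrence {R : Type*} [CommRing R] {P : ℕ → R[X]} {b : ℕ → R}
    (h0 : P 0 = 1) (h1 : P 1 = X) (hrec : ∀ n, X * P (n + 1) = P (n + 2) + C (b n) * P n)
    (x : R) (n : ℕ) : (P n).eval (-x) = (-1) ^ n * (P n).eval x := by
  have hP2 n y : (P (n + 2)).eval y = y * (P (n + 1)).eval y - b n * (P n).eval y := by
    have := congrArg (eval y) (hrec n)
    simp only [eval_mul, eval_add, eval_X, eval_C] at this
    linear_combination -this
  induction n using Nat.twoStepInduction with
  | zero => simp [h0]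
  | one => simp [h1]
  | more n ih0 ih1 => rw [hP2, hP2, ih0, ih1]; ring

section TruncatedHermite

open Real

variable {z : ℝ} {P : ℕ → ℝ[X]} {γ : ℕ → ℝ}

theorem two_mul_eval_mul_eval_mul_exp (hP : IsMonicOrthogonalFamily (truncLinear z) P)
    (hpar : ∀ n, (P n).eval (-z) = (-1) ^ n * (P n).eval z) (n : ℕ) :
    2 * (P (n + 1)).eval z * (P n).eval z * exp (-z ^ 2) =
      (n + 1) * truncL z (P n * P n) - 2 * truncL z (P (n + 1) * P (n + 1)) := by
  have hibp := truncL_derivative_sub_two_mul_X z (P (n + 1) * P n)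
  have hsign : ((-1 : ℝ) ^ (n + 1) * (-1) ^ n) = -1 := by
    rw [← pow_add, show n + 1 + n = 2 * n + 1 by ring, pow_succ, pow_mul]; norm_num
  rw [← truncLinear_apply, ← truncLinear_apply, hP.map_derivative_mul, hP.map_X_mul_mul] at hibp
  simp only [truncLinear_apply, eval_mul, hpar] at hibp
  linear_combination -hibp + ((P (n + 1)).eval z * (P n).eval z * exp (-z ^ 2)) * hsign

theorem mul_exp_mul_eval_sq_sub_eq (hP : IsMonicOrthogonalFamily (truncLinear z) P) (h0 : P 0 = 1)
    (h1 : P 1 = X) (hrec : ∀ n, X * P (n + 1) = P (n + 2) + C (γ (n + 1)) * P n) (hγ0 : γ 0 = 0)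
    (m : ℕ) :
    z * exp (-z ^ 2) * ((P (m + 1)).eval z ^ 2 - γ (m + 1) * (P m).eval z ^ 2) =
      truncL z (P (m + 1) * P (m + 1)) * (γ m - γ (m + 2) + 1) := by
  have hbdry := two_mul_eval_mul_eval_mul_exp hP (eval_neg_of_recurrence h0 h1 hrec z)
  have hnorm k : γ (k + 1) * truncL z (P k * P k) = truncL z (P (k + 1) * P (k + 1)) :=
    hP.mul_map_mul_self_of_recurrence (hrec k)
  have heval k : z * (P (k + 1)).eval z = (P (k + 2)).eval z + γ (k + 1) * (P k).eval z := by
    simpa using congrArg (eval z) (hrec k)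
  rcases m with _ | k
  · have hb := hbdry 1
    have he := heval 0
    have hn := hnorm 1
    norm_num [h0, h1] at hb he hn ⊢
    linear_combination (1 / 2) * hb + (exp (-z ^ 2) * z) * he + hn - truncL z (X * X) * hγ0
  · have hb := hbdry (k + 2)
    push_cast at hb
    linear_combination (exp (-z ^ 2) * (P (k + 2)).eval z) * heval (k + 1)
      - (exp (-z ^ 2) * γ (k + 2) * (P (k + 1)).eval z) * heval k + (1 / 2) * hb
      - (γ (k + 2) * γ (k + 1) / 2) * hbdry k + hnorm (k + 2)
      + (γ (k + 1) - ((k : ℝ) + 1) / 2) * hnorm (k + 1) - ((k + 1) * γ (k + 2) / 2) * hnorm k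

end TruncatedHermite

section TruncatedHermiteFamily

open Real Filter Topology

variable {P : ℝ → ℕ → ℝ[X]} {γ : ℕ → ℝ → ℝ} {z : ℝ}

theorem eventuallyEq_truncL_mul_self_succ (hz : 0 < z)
    (hP : ∀ w, 0 < w → IsMonicOrthogonalFamily (truncLinear w) (P w))
    (hrec : ∀ w, 0 < w → ∀ n, X * P w (n + 1) = P w (n + 2) + C (γ (n + 1) w) * P w n) (n : ℕ) :
    (fun w => truncL w (P w (n + 1) * P w (n + 1))) =ᶠ[𝓝 z]
      fun w => γ (n + 1) w * truncL w (P w n * P w n) := by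
  filter_upwards [eventually_gt_nhds hz] with w hw
  exact ((hP w hw).mul_map_mul_self_of_recurrence (hrec w hw n)).symm

theorem differentiableAt_truncL_mul_self (hz : 0 < z)
    (hP : ∀ w, 0 < w → IsMonicOrthogonalFamily (truncLinear w) (P w)) (h0 : ∀ w, P w 0 = 1)
    (hrec : ∀ w, 0 < w → ∀ n, X * P w (n + 1) = P w (n + 2) + C (γ (n + 1) w) * P w n)
    (hγ : ∀ n, DifferentiableAt ℝ (γ n) z) (n : ℕ) :
    DifferentiableAt ℝ (fun w => truncL w (P w n * P w n)) z := by
  induction n with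
  | zero => simpa [h0] using (hasDerivAt_truncL 1 z).differentiableAt
  | succ n ih =>
    exact ((hγ (n + 1)).mul ih).congr_of_eventuallyEq
      (eventuallyEq_truncL_mul_self_succ hz hP hrec n)

theorem hasDerivAt_truncL_mul_self (hz : 0 < z)
    (hP : ∀ w, 0 < w → IsMonicOrthogonalFamily (truncLinear w) (P w)) {n : ℕ}
    (hd : DifferentiableAt ℝ (fun w => truncL w (P w n * P w n)) z) :
    HasDerivAt (fun w => truncL w (P w n * P w n))
      (((P z n).eval z ^ 2 + (P z n).eval (-z) ^ 2) * exp (-z ^ 2)) z := by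
  -- `P w n` minimises `truncL w (q * q)` over monic `q` of degree `n`, and `P z n` is such a `q`.
  have hmin : IsLocalMin (fun w => truncL w (P z n * P z n) - truncL w (P w n * P w n)) z := by
    filter_upwards [eventually_gt_nhds hz] with w hw
    rw [sub_self, sub_nonneg]
    exact (hP w hw).map_mul_self_le (truncL_mul_self_nonneg hw.le) ((hP z hz).monic n)
      ((hP z hz).natDegree_eq n)
  have hzero := hmin.hasDerivAt_eq_zero ((hasDerivAt_truncL _ z).sub hd.hasDerivAt)
  rw [eval_mul, eval_mul] at hzero
  exact hd.hasDerivAt.congr_deriv (by linear_combination -hzero)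

end TruncatedHermiteFamily

theorem truncated_hermite_toda_gamma (P : ℝ → ℕ → Polynomial ℝ) (γ h : ℕ → ℝ → ℝ)
    (hmonic : ∀ z n, (P z n).Monic) (hdeg : ∀ z n, (P z n).natDegree = n)
    (horth : ∀ z, 0 < z → ∀ m n, m ≠ n → truncL z (P z m * P z n) = 0)
    (hP0 : ∀ z, P z 0 = 1) (hP1 : ∀ z, P z 1 = X)
    (hrec : ∀ z, 0 < z → ∀ n, X * P z (n + 1) = P z (n + 2) + C (γ (n + 1) z) * P z n)
    (hh : ∀ n z, h n z = truncL z (P z n * P z n)) (hγ0 : ∀ z, γ 0 z = 0)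
    (hdiff : ∀ n z, 0 < z → DifferentiableAt ℝ (γ n) z) :
    ∀ n : ℕ, 1 ≤ n → ∀ z : ℝ, 0 < z →
      z * deriv (γ n) z = 2 * γ n z * (γ (n - 1) z - γ (n + 1) z + 1) := by
  intro n hn z hz
  obtain ⟨m, rfl⟩ := Nat.exists_eq_add_of_le' hn
  have hhk k : h k = fun w => truncL w (P w k * P w k) := funext (hh k)
  have hP w (hw : 0 < w) : IsMonicOrthogonalFamily (truncLinear w) (P w) :=
    ⟨hmonic w, hdeg w, horth w hw⟩
  have hder k : HasDerivAt (h k) (2 * (P z k).eval z ^ 2 * Real.exp (-z ^ 2)) z := by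
    rw [hhk]
    convert hasDerivAt_truncL_mul_self hz hP
      (differentiableAt_truncL_mul_self hz hP hP0 hrec (fun k => hdiff k z hz) k) using 1
    rw [eval_neg_of_recurrence (hP0 z) (hP1 z) (hrec z hz), mul_pow, ← pow_mul, pow_mul',
      neg_one_sq, one_pow]
    ring
  have hderiv := (hder (m + 1)).unique
    (((hdiff (m + 1) z hz).hasDerivAt.mul (hder m)).congr_of_eventuallyEq (by
      simp only [hhk]; exact eventuallyEq_truncL_mul_self_succ hz hP hrec m))
  have hkey := mul_exp_mul_eval_sq_sub_eq (γ := fun k => γ k z) (hP z hz) (hP0 z) (hP1 z)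
    (hrec z hz) (hγ0 z) m
  have hnorm := (hP z hz).mul_map_mul_self_of_recurrence (hrec z hz m)
  apply mul_right_cancel₀ (truncL_mul_self_pos hz (hmonic z m).ne_zero).ne'
  simp only [Nat.add_sub_cancel, truncLinear_apply, hh] at hnorm hderiv ⊢
  linear_combination -z * hderiv + 2 * hkey - 2 * (γ m z - γ (m + 2) z + 1) * hnorm
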